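/- arXiv:1208.3097 — 7 statements merged into one kernel-verified Lean document; each statement's English description precedes it below -/
import Mathlib

section
/- Let k be a field, V and W finite-dimensional k-vector spaces, and n ≥ 0. For 0 ≤ i ≤ n let π_i : (V ⊕ W)^{⊗n} → V^{⊗i} ⊗ W^{⊗(n−i)} be the k-linear map determined on pure tensors z_1 ⊗ … ⊗ z_n with z_j = (v_j, w_j) ∈ V ⊕ W by π_i(z_1 ⊗ … ⊗ z_n) = v_1 ⊗ … ⊗ v_i ⊗ w_{i+1} ⊗ … ⊗ w_n. Then the map x ↦ (π_0(x), …, π_n(x)) restricts to a k-linear isomorphism from Γⁿ(V ⊕ W) onto the direct sum ⊕_{i=0}^{n} Γⁱ(V) ⊗ Γ^{n−i}(W), where Γⁱ(V) ⊗ Γ^{n−i}(W) is viewed as a subspace of V^{⊗i} ⊗ W^{⊗(n−i)}. -/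
/-!
Fix bases of `V` and `W`, so that `V × W` has a basis indexed by `ιV ⊕ ιW` and every tensor
power carries the product basis. A tensor is `S_n`-invariant iff its coordinate function on
words `(ιV ⊕ ιW)^n` is, and every `S_n`-orbit of words contains a word `joinSum p q` (`i`
letters of `ιV` followed by `n - i` letters of `ιW`), unique up to `S_i × S_{n-i}`. The
`(p, q)`-coordinate of `π_i x` is the `joinSum p q`-coordinate of `x`. Hence an invariant `x` is
determined by the `π_i x`, and a family of `S_i × S_{n-i}`-invariant coordinate functions glues
to an `S_n`-invariant one. Finally `Γⁱ(V) ⊗ Γ^{n-i}(W)` consists exactly of the tensors with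
`S_i × S_{n-i}`-invariant coordinates, being spanned by the tensor products of orbit sums.
-/

open scoped TensorProduct
open PiTensorProduct

/-- The action of a permutation `σ ∈ S_n` on the `n`-th tensor power `V^{⊗n}`,
permuting the tensor factors. -/
noncomputable def permAction (k : Type*) [CommSemiring k] (V : Type*) [AddCommGroup V]
    [Module k V] {n : ℕ} (σ : Equiv.Perm (Fin n)) :
    (⨂[k]^n V) ≃ₗ[k] (⨂[k]^n V) :=
  PiTensorProduct.reindex k (fun _ => V) σ

/-- The `n`-th divided power `Γⁿ(V)`: the subspace of `S_n`-invariant tensors in the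
`n`-th tensor power `V^{⊗n}`. -/
noncomputable def dividedPower (k : Type*) [CommSemiring k] (V : Type*) [AddCommGroup V]
    [Module k V] (n : ℕ) : Submodule k (⨂[k]^n V) :=
  ⨅ σ : Equiv.Perm (Fin n), LinearMap.eqLocus (permAction k V σ).toLinearMap LinearMap.id

open Module Equiv

namespace Module.Basis

variable {k V ι : Type*} [CommSemiring k] [AddCommGroup V] [Module k V]

noncomputable abbrev tensorPower (b : Basis ι k V) (m : ℕ) :
    Basis (Fin m → ι) k (⨂[k]^m V) :=
  Basis.piTensorProduct fun _ => b

variable (b : Basis ι k V) {m : ℕ}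

theorem tensorPower_repr_permAction (σ : Perm (Fin m)) (x : ⨂[k]^m V) (f : Fin m → ι) :
    (b.tensorPower m).repr (permAction k V σ x) f = (b.tensorPower m).repr x (f ∘ σ) := by
  suffices ((b.tensorPower m).coord f).comp (permAction k V σ).toLinearMap =
      (b.tensorPower m).coord (f ∘ σ) from LinearMap.congr_fun this x
  refine PiTensorProduct.ext (MultilinearMap.ext fun z => ?_)
  simpa [permAction, reindex_tprod] using
    (prod_comp σ fun j => b.repr (z (σ.symm j)) (f j)).symm

theorem mem_dividedPower_iff_repr (x : ⨂[k]^m V) :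
    x ∈ dividedPower k V m ↔
      ∀ (f : Fin m → ι) (σ : Perm (Fin m)),
        (b.tensorPower m).repr x (f ∘ σ) = (b.tensorPower m).repr x f := by
  simp only [dividedPower, Submodule.mem_iInf, LinearMap.mem_eqLocus, LinearEquiv.coe_coe,
    LinearMap.id_apply, (b.tensorPower m).ext_elem_iff, tensorPower_repr_permAction]
  exact forall_comm

variable [Fintype ι] [LinearOrder ι]

-- `f ∘ Tuple.sort f` is the sorted rearrangement of `f`: this sums the basis tensors over the
-- `S_m`-orbit of `r` when `r` is sorted, and is `0` otherwise.
noncomputable def orbitSum (r : Fin m → ι) : ⨂[k]^m V :=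
  ∑ f with f ∘ Tuple.sort f = r, b.tensorPower m f

theorem tensorPower_repr_orbitSum (r f : Fin m → ι) :
    (b.tensorPower m).repr (b.orbitSum r) f = if f ∘ Tuple.sort f = r then 1 else 0 := by
  simp [orbitSum, -Basis.piTensorProduct_apply, Finsupp.single_apply]

theorem orbitSum_mem_dividedPower (r : Fin m → ι) : b.orbitSum r ∈ dividedPower k V m :=
  (b.mem_dividedPower_iff_repr _).2 fun f σ => by
    simp only [tensorPower_repr_orbitSum, Tuple.comp_perm_comp_sort_eq_comp_sort]

end Module.Basis

section TensorProduct

open Module.Basis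

variable {k V W ιV ιW : Type*} [CommSemiring k] [AddCommGroup V] [Module k V]
  [AddCommGroup W] [Module k W] (bV : Basis ιV k V) (bW : Basis ιW k W) {m₁ m₂ : ℕ}

theorem mem_range_map_dividedPower_iff [Fintype ιV] [LinearOrder ιV] [Fintype ιW]
    [LinearOrder ιW] (y : (⨂[k]^m₁ V) ⊗[k] (⨂[k]^m₂ W)) :
    y ∈ LinearMap.range
        (TensorProduct.map (dividedPower k V m₁).subtype (dividedPower k W m₂).subtype) ↔
      ∀ (p : Fin m₁ → ιV) (q : Fin m₂ → ιW) (σ : Perm (Fin m₁))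
        (τ : Perm (Fin m₂)),
        ((bV.tensorPower m₁).tensorProduct (bW.tensorPower m₂)).repr y (p ∘ σ, q ∘ τ) =
          ((bV.tensorPower m₁).tensorProduct (bW.tensorPower m₂)).repr y (p, q) := by
  set T := (bV.tensorPower m₁).tensorProduct (bW.tensorPower m₂)
  constructor
  · rintro ⟨t, rfl⟩ p q σ τ
    induction t using TensorProduct.induction_on with
    | zero => simp
    | tmul a c =>
      simp only [T, TensorProduct.map_tmul, Submodule.subtype_apply, tensorProduct_repr_tmul_apply,
        (bV.mem_dividedPower_iff_repr _).1 a.2, (bW.mem_dividedPower_iff_repr _).1 c.2]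
    | add u v hu hv => simp only [map_add, Finsupp.add_apply, hu, hv]
  · intro hy
    have hy_eq : y = ∑ r, ∑ s, T.repr y (r, s) • (bV.orbitSum r ⊗ₜ[k] bW.orbitSum s) := by
      refine T.ext_elem fun ⟨p, q⟩ => ?_
      simp only [T, map_sum, map_smul, Finsupp.finsetSum_apply, Finsupp.coe_smul, Pi.smul_apply,
        tensorProduct_repr_tmul_apply, tensorPower_repr_orbitSum, smul_eq_mul, mul_ite, mul_one,
        mul_zero, Finset.sum_ite_irrel, Finset.sum_ite_eq, Finset.mem_univ, ↓reduceIte,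
        Finset.sum_const_zero]
      exact (hy p q _ _).symm
    rw [hy_eq]
    refine Submodule.sum_mem _ fun r _ =>
      Submodule.sum_mem _ fun s _ => Submodule.smul_mem _ _ ?_
    exact ⟨⟨_, bV.orbitSum_mem_dividedPower r⟩ ⊗ₜ ⟨_, bW.orbitSum_mem_dividedPower s⟩, rfl⟩

end TensorProduct

section JoinSum

variable {α β : Type*} {n i : ℕ}

def finSumFinSubEquiv (h : i ≤ n) : Fin i ⊕ Fin (n - i) ≃ Fin n :=
  finSumFinEquiv.trans (finCongr (Nat.add_sub_of_le h))

def joinSum (h : i ≤ n) (p : Fin i → α) (q : Fin (n - i) → β) : Fin n → α ⊕ β :=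
  Sum.map p q ∘ (finSumFinSubEquiv h).symm

theorem joinSum_comp_perm (h : i ≤ n) (p : Fin i → α) (q : Fin (n - i) → β)
    (σ : Perm (Fin i)) (τ : Perm (Fin (n - i))) :
    joinSum h (p ∘ σ) (q ∘ τ) =
      joinSum h p q ∘ (finSumFinSubEquiv h).permCongr (σ.sumCongr τ) := by
  ext j
  simp [joinSum, permCongr_apply, Sum.map_map]

theorem card_isLeft_comp_perm (g : Fin n → α ⊕ β) (P : Perm (Fin n)) :
    Fintype.card {j // ((g ∘ P) j).isLeft} = Fintype.card {j // (g j).isLeft} :=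
  Fintype.card_congr (P.subtypeEquiv fun _ => Iff.rfl)

theorem card_isLeft_joinSum (h : i ≤ n) (p : Fin i → α) (q : Fin (n - i) → β) :
    Fintype.card {j // (joinSum h p q j).isLeft} = i := by
  refine (Fintype.card_congr ?_).trans (Fintype.card_fin i)
  exact ((finSumFinSubEquiv h).symm.subtypeEquiv fun j => by simp [joinSum]).trans sumIsLeft

theorem exists_comp_perm_eq_joinSum (g : Fin n → α ⊕ β) :
    ∃ (i : Fin (n + 1)) (p : Fin i → α) (q : Fin (n - i) → β) (P : Perm (Fin n)),
      g ∘ P = joinSum i.is_le p q := by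
  have hL : Fintype.card {j // (g j).isLeft} ≤ n :=
    (Fintype.card_subtype_le _).trans_eq (Fintype.card_fin n)
  let eL := (Fintype.equivFin {j // (g j).isLeft}).symm
  let eR : Fin (n - Fintype.card {j // (g j).isLeft}) ≃ {j // ¬(g j).isLeft} :=
    (Fintype.equivFinOfCardEq (by rw [Fintype.card_subtype_compl, Fintype.card_fin])).symm
  refine ⟨⟨_, Nat.lt_succ_of_le hL⟩, fun s => (g (eL s)).getLeft (eL s).2,
    fun s => (g (eR s)).getRight (Sum.not_isLeft.1 (eR s).2),
    (finSumFinSubEquiv hL).symm.trans ((eL.sumCongr eR).trans (sumCompl _)), ?_⟩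
  ext j
  obtain ⟨x, rfl⟩ := (finSumFinSubEquiv hL).surjective j
  cases x <;> simp only [joinSum, coe_trans, Function.comp_apply, symm_apply_apply,
    sumCongr_apply, Sum.map_inl, Sum.map_inr, sumCompl_apply_inl, sumCompl_apply_inr,
    Sum.inl_getLeft, Sum.inr_getRight]

theorem exists_perm_of_joinSum_comp_perm {h : i ≤ n} {p p' : Fin i → α}
    {q q' : Fin (n - i) → β} {P : Perm (Fin n)} (hP : joinSum h p q ∘ P = joinSum h p' q') :
    ∃ (σ : Perm (Fin i)) (τ : Perm (Fin (n - i))), p ∘ σ = p' ∧ q ∘ τ = q' := by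
  let e := finSumFinSubEquiv h
  have hQ : Sum.map p q ∘ e.symm.permCongr P = Sum.map p' q' := by
    ext x
    simpa [joinSum, e, permCongr_apply] using congrFun hP (e x)
  obtain ⟨⟨σ, τ⟩, hστ⟩ :=
    Perm.mem_sumCongrHom_range_of_perm_mapsTo_inl (σ := e.symm.permCongr P) (by
      rintro _ ⟨s, rfl⟩
      have hs := congrArg Sum.isLeft (congrFun hQ (.inl s))
      simp only [Function.comp_apply, Sum.isLeft_map, Sum.map_inl, Sum.isLeft_inl] at hs
      obtain ⟨a, ha⟩ := Sum.isLeft_iff.1 hs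
      exact ⟨a, ha.symm⟩)
  simp only [Perm.sumCongrHom_apply] at hστ
  rw [← hστ] at hQ
  exact ⟨σ, τ, funext fun s => Sum.inl_injective (congrFun hQ (.inl s)),
    funext fun s => Sum.inr_injective (congrFun hQ (.inr s))⟩

variable {γ : Type*}

theorem eq_of_forall_joinSum {C C' : (Fin n → α ⊕ β) → γ}
    (hC : ∀ g (P : Perm (Fin n)), C (g ∘ P) = C g)
    (hC' : ∀ g (P : Perm (Fin n)), C' (g ∘ P) = C' g)
    (h : ∀ (i : Fin (n + 1)) p q, C (joinSum i.is_le p q) = C' (joinSum i.is_le p q)) :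
    C = C' := by
  ext g
  obtain ⟨i, p, q, P, hP⟩ := exists_comp_perm_eq_joinSum g
  rw [← hC g P, ← hC' g P, hP, h]

theorem exists_perm_invariant_extending_joinSum
    (c : ∀ i : Fin (n + 1), (Fin i → α) → (Fin (n - i) → β) → γ)
    (hc : ∀ (i : Fin (n + 1)) p q (σ : Perm (Fin i)) (τ : Perm (Fin (n - i))),
      c i (p ∘ σ) (q ∘ τ) = c i p q) :
    ∃ C : (Fin n → α ⊕ β) → γ, (∀ g (P : Perm (Fin n)), C (g ∘ P) = C g) ∧
      ∀ (i : Fin (n + 1)) p q, C (joinSum i.is_le p q) = c i p q := by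
  choose I p q P hP using exists_comp_perm_eq_joinSum (α := α) (β := β) (n := n)
  have key : ∀ g (i : Fin (n + 1)) p' q' (P' : Perm (Fin n)), g ∘ P' = joinSum i.is_le p' q' →
      c (I g) (p g) (q g) = c i p' q' := by
    intro g i p' q' P' hP'
    have hi : i = I g := Fin.ext <| by
      rw [← card_isLeft_joinSum i.is_le p' q', ← card_isLeft_joinSum (I g).is_le (p g) (q g),
        ← hP', ← hP, card_isLeft_comp_perm, card_isLeft_comp_perm]
    subst hi
    obtain ⟨σ, τ, hσ, hτ⟩ := exists_perm_of_joinSum_comp_perm (p := p') (p' := p g)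
      (P := (P g).trans P'.symm) (by rw [← hP', ← hP]; ext; simp)
    rw [← hσ, ← hτ, hc]
  refine ⟨fun g => c (I g) (p g) (q g), fun g P' => ?_, fun i p' q' => key _ _ _ _ 1 rfl⟩
  exact key (g ∘ P') _ _ _ ((P g).trans P'.symm) (by rw [← hP g]; ext; simp)

end JoinSum

open Module.Basis in
theorem repr_apply_eq_repr_joinSum {k V W ιV ιW : Type*} [CommSemiring k] [AddCommGroup V]
    [Module k V] [AddCommGroup W] [Module k W] (bV : Basis ιV k V) (bW : Basis ιW k W)
    {n i : ℕ} (h : i ≤ n)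
    (Φ : (⨂[k]^n (V × W)) →ₗ[k] (⨂[k]^i V) ⊗[k] (⨂[k]^(n - i) W))
    (hΦ : ∀ z : Fin n → V × W, Φ (tprod k z) =
      (tprod k fun j : Fin i => (z (Fin.castLE h j)).1) ⊗ₜ[k]
        (tprod k fun j : Fin (n - i) => (z ⟨i + j, by omega⟩).2))
    (x : ⨂[k]^n (V × W)) (p : Fin i → ιV) (q : Fin (n - i) → ιW) :
    ((bV.tensorPower i).tensorProduct (bW.tensorPower (n - i))).repr (Φ x) (p, q) =
      ((bV.prod bW).tensorPower n).repr x (joinSum h p q) := by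
  suffices (((bV.tensorPower i).tensorProduct (bW.tensorPower (n - i))).coord (p, q)).comp Φ =
      ((bV.prod bW).tensorPower n).coord (joinSum h p q) from LinearMap.congr_fun this x
  refine PiTensorProduct.ext (MultilinearMap.ext fun z => ?_)
  simp only [LinearMap.compMultilinearMap_apply, LinearMap.coe_comp, Function.comp_apply, hΦ,
    coord_apply, tensorProduct_repr_tmul_apply, Basis.piTensorProduct_repr_tprod_apply,
    smul_eq_mul]
  rw [← (finSumFinSubEquiv h).prod_comp, Fintype.prod_sum_type, mul_comm]
  simp only [joinSum, Function.comp_apply, symm_apply_apply, Sum.map_inl, Sum.map_inr,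
    Basis.prod_repr_inl, Basis.prod_repr_inr]
  -- `finSumFinSubEquiv h` sends `.inl s` to `Fin.castLE h s` and `.inr s` to `⟨i + s, _⟩`
  rfl

/-- exponential property of divided powers: for finite-dimensional vector
spaces `V, W` over a field `k` and `n ≥ 0`, the maps `π i` sending a pure tensor
`z₁ ⊗ ⋯ ⊗ zₙ` in `(V ⊕ W)^{⊗n}` (with `z_j = (v_j, w_j)`) to
`v₁ ⊗ ⋯ ⊗ v_i ⊗ w_{i+1} ⊗ ⋯ ⊗ w_n` assemble to a `k`-linear isomorphism from
`Γⁿ(V ⊕ W)` onto `⊕_{i=0}^{n} Γⁱ(V) ⊗ Γ^{n-i}(W)`, where `Γⁱ(V) ⊗ Γ^{n-i}(W)` is viewed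
as a subspace of `V^{⊗i} ⊗ W^{⊗(n-i)}`. -/
theorem stmt_1 {k : Type*} [Field k] (V W : Type*)
    [AddCommGroup V] [Module k V] [AddCommGroup W] [Module k W]
    [FiniteDimensional k V] [FiniteDimensional k W] (n : ℕ)
    (π : ∀ i : Fin (n + 1),
      (⨂[k]^n (V × W)) →ₗ[k] (⨂[k]^(i : ℕ) V) ⊗[k] (⨂[k]^(n - (i : ℕ)) W))
    (hπ : ∀ (i : Fin (n + 1)) (z : Fin n → V × W),
      π i (PiTensorProduct.tprod k z) =
        (PiTensorProduct.tprod k fun j : Fin (i : ℕ) => (z (Fin.castLE i.is_le j)).1)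
          ⊗ₜ[k]
        (PiTensorProduct.tprod k fun j : Fin (n - (i : ℕ)) =>
          (z ⟨(i : ℕ) + (j : ℕ), by have := j.isLt; have := i.is_le; omega⟩).2)) :
    Set.InjOn (fun x => fun i : Fin (n + 1) => π i x)
      (dividedPower k (V × W) n : Set (⨂[k]^n (V × W))) ∧
    (fun x => fun i : Fin (n + 1) => π i x) '' (dividedPower k (V × W) n) =
      {f : ∀ i : Fin (n + 1), (⨂[k]^(i : ℕ) V) ⊗[k] (⨂[k]^(n - (i : ℕ)) W) |
        ∀ i : Fin (n + 1), f i ∈ LinearMap.range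
          (TensorProduct.map (dividedPower k V (i : ℕ)).subtype
            (dividedPower k W (n - (i : ℕ))).subtype)} := by
  let bV := Module.finBasis k V
  let bW := Module.finBasis k W
  let bVW := bV.prod bW
  let B := bVW.tensorPower n
  have hπ_repr : ∀ (i : Fin (n + 1)) x p q,
      ((bV.tensorPower i).tensorProduct (bW.tensorPower (n - i))).repr (π i x) (p, q) =
        B.repr x (joinSum i.is_le p q) :=
    fun i => repr_apply_eq_repr_joinSum bV bW i.is_le (π i) (hπ i)
  refine ⟨fun x hx y hy hxy => ?_, Set.ext fun f => ⟨?_, fun hf => ?_⟩⟩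
  · refine B.ext_elem fun g => congrFun (eq_of_forall_joinSum
      ((bVW.mem_dividedPower_iff_repr _).1 hx) ((bVW.mem_dividedPower_iff_repr _).1 hy)
      fun i p q => ?_) g
    rw [← hπ_repr, ← hπ_repr, show π i x = π i y from congrFun hxy i]
  · rintro ⟨x, hx, rfl⟩ i
    refine (mem_range_map_dividedPower_iff bV bW _).2 fun p q σ τ => ?_
    rw [hπ_repr, hπ_repr, joinSum_comp_perm]
    exact (bVW.mem_dividedPower_iff_repr _).1 hx _ _
  · obtain ⟨C, hC_perm, hC_joinSum⟩ := exists_perm_invariant_extending_joinSum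
      (fun i p q => ((bV.tensorPower i).tensorProduct (bW.tensorPower (n - i))).repr (f i) (p, q))
      fun i => (mem_range_map_dividedPower_iff bV bW _).1 (hf i)
    have hC : ∀ g, B.repr (B.equivFun.symm C) g = C g := fun g => by
      rw [← B.equivFun_apply, LinearEquiv.apply_symm_apply]
    refine ⟨B.equivFun.symm C, (bVW.mem_dividedPower_iff_repr _).2 fun g P => ?_,
      funext fun i =>
        ((bV.tensorPower i).tensorProduct (bW.tensorPower (n - i))).ext_elem fun pq => ?_⟩
    · rw [hC, hC, hC_perm]
    · rw [← Prod.mk.eta (p := pq), hπ_repr, hC, hC_joinSum]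
end

section
/- Let k be an infinite field, n ≥ 1, d ≥ 1, and let e_1, …, e_n be the standard basis of kⁿ. For t = (t_1, …, t_n) ∈ (kˣ)ⁿ let diag(t) ∈ GL_n(k) be the corresponding diagonal matrix, acting on (kⁿ)^{⊗d} by diag(t)·(v_1 ⊗ … ⊗ v_d) = (diag(t) v_1) ⊗ … ⊗ (diag(t) v_d). Let λ : {1, …, n} → ℕ satisfy λ_1 + … + λ_n = d. Then the subspace W_λ = {x ∈ Γᵈ(kⁿ) : for all t ∈ (kˣ)ⁿ, diag(t)·x = (∏_{i=1}^{n} t_i^{λ_i}) x} has dimension exactly 1. -/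
open scoped TensorProduct
open PiTensorProduct

/-- The action of the diagonal matrix `diag(t)`, `t ∈ (kˣ)ⁿ`, on the `d`-th tensor power
of `kⁿ`: `diag(t)·(v₁ ⊗ ⋯ ⊗ v_d) = (diag(t) v₁) ⊗ ⋯ ⊗ (diag(t) v_d)`. -/
noncomputable def diagAction (k : Type*) [Field k] (n d : ℕ) (t : Fin n → kˣ) :
    (⨂[k]^d (Fin n → k)) →ₗ[k] (⨂[k]^d (Fin n → k)) :=
  PiTensorProduct.map fun _ : Fin d =>
    Matrix.mulVecLin (Matrix.diagonal fun i => (t i : k))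


/-!
The tensors `⊗ᵢ e_{f i}`, `f : Fin d → Fin n`, form a basis of `(kⁿ)^{⊗d}` on which the torus acts
diagonally, with character `t ↦ ∏ⱼ tⱼ ^ #f⁻¹(j)`, and which `S_d` permutes. As `k` is infinite,
distinct exponent vectors give distinct characters, so a vector of weight `λ` is supported on the
`f` with fibre sizes `λ`. These `f` form one `S_d`-orbit, so an `S_d`-invariant such vector has
constant coefficients there: `W_λ` is spanned by the sum of the corresponding basis vectors.
-/

open Finset Module

section FiberCard

variable {ι κ : Type*} [Fintype ι] [DecidableEq κ]

def fiberCard (f : ι → κ) (j : κ) : ℕ := Fintype.card {i // f i = j}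

lemma fiberCard_comp_perm (f : ι → κ) (σ : Equiv.Perm ι) : fiberCard (f ∘ σ) = fiberCard f :=
  funext fun _ => Fintype.card_congr (σ.subtypeEquiv fun _ => Iff.rfl)

lemma prod_comp_eq_prod_pow_fiberCard [Fintype κ] {M : Type*} [CommMonoid M] (f : ι → κ)
    (c : κ → M) : ∏ i, c (f i) = ∏ j, c j ^ fiberCard f j := by
  rw [← prod_fiberwise univ f fun i => c (f i)]
  refine prod_congr rfl fun j _ => ?_
  rw [fiberCard, Fintype.card_subtype, ← prod_const]
  exact prod_congr rfl fun i hi => by rw [(mem_filter.1 hi).2]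

lemma exists_fiberCard_eq [Fintype κ] (m : κ → ℕ) (hm : ∑ j, m j = Fintype.card ι) :
    ∃ f : ι → κ, fiberCard f = m := by
  let e : ι ≃ Σ j, Fin (m j) := Fintype.equivOfCardEq (by simp [hm])
  refine ⟨fun i => (e i).1, funext fun j => ?_⟩
  rw [fiberCard, Fintype.card_congr ((e.subtypeEquiv fun _ => Iff.rfl).trans
    (Equiv.sigmaSubtype j)), Fintype.card_fin]

lemma exists_perm_eq_comp_of_fiberCard_eq {f g : ι → κ} (h : fiberCard f = fiberCard g) :
    ∃ σ : Equiv.Perm ι, f = g ∘ σ :=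
  ⟨Equiv.ofFiberEquiv fun j => Fintype.equivOfCardEq (congrFun h j),
    funext fun i => (Equiv.ofFiberEquiv_map _ i).symm⟩

end FiberCard

section Characters

variable {k : Type*} [Field k] [Infinite k]

lemma eq_of_forall_units_pow_eq {a b : ℕ} (h : ∀ u : kˣ, (u : k) ^ a = (u : k) ^ b) : a = b := by
  have hX : (Polynomial.X ^ a : Polynomial k) = Polynomial.X ^ b :=
    Polynomial.eq_of_infinite_eval_eq _ _ <| (Set.finite_singleton (0 : k)).infinite_compl.mono
      fun x (hx : x ≠ 0) => by simpa using h (Units.mk0 x hx)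
  simpa using congrArg Polynomial.natDegree hX

lemma eq_of_forall_prod_pow_eq {ι : Type*} [Fintype ι] [DecidableEq ι] {a b : ι → ℕ}
    (h : ∀ t : ι → kˣ, ∏ j, (t j : k) ^ a j = ∏ j, (t j : k) ^ b j) : a = b :=
  funext fun j => eq_of_forall_units_pow_eq fun u => by
    simpa [Pi.mulSingle_apply, apply_ite] using h (Pi.mulSingle j u)

end Characters

section Eigenbasis

variable {ι R M : Type*} [CommSemiring R] [AddCommMonoid M] [Module R M] (b : Basis ι R M)
  {L : M →ₗ[R] M}

lemma Module.Basis.repr_map_of_apply_eq_smul {μ : ι → R} (h : ∀ i, L (b i) = μ i • b i) (x : M)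
    (i : ι) : b.repr (L x) i = μ i * b.repr x i := by
  classical
  refine LinearMap.congr_fun (b.ext (f₁ := Finsupp.lapply i ∘ₗ b.repr.toLinearMap ∘ₗ L)
    (f₂ := μ i • (Finsupp.lapply i ∘ₗ b.repr.toLinearMap)) fun j => ?_) x
  by_cases hij : j = i
  · subst hij; simp [h]
  · simp [h, hij]

lemma Module.Basis.repr_map_of_apply_eq_apply {e : ι ≃ ι} (h : ∀ i, L (b i) = b (e i)) (x : M)
    (i : ι) : b.repr (L x) i = b.repr x (e.symm i) := by
  classical
  refine LinearMap.congr_fun (b.ext (f₁ := Finsupp.lapply i ∘ₗ b.repr.toLinearMap ∘ₗ L)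
    (f₂ := Finsupp.lapply (e.symm i) ∘ₗ b.repr.toLinearMap) fun j => ?_) x
  simp [h, Finsupp.single_apply, e.eq_symm_apply]

end Eigenbasis

lemma mem_dividedPower_iff {k V : Type*} [CommSemiring k] [AddCommGroup V] [Module k V] {d : ℕ}
    {x : ⨂[k]^d V} : x ∈ dividedPower k V d ↔ ∀ σ, permAction k V σ x = x := by
  simp [dividedPower, Submodule.mem_iInf]

section TensorPower

variable (k : Type*) [Field k] (n d : ℕ)

noncomputable def tensorPowerBasis : Basis (Fin d → Fin n) k (⨂[k]^d (Fin n → k)) :=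
  Basis.piTensorProduct fun _ => Pi.basisFun k (Fin n)

lemma tensorPowerBasis_apply (f : Fin d → Fin n) :
    tensorPowerBasis k n d f = ⨂ₜ[k] i, Pi.single (f i) 1 := by
  simp [tensorPowerBasis]

variable {k n d}

lemma diagAction_tensorPowerBasis (t : Fin n → kˣ) (f : Fin d → Fin n) :
    diagAction k n d t (tensorPowerBasis k n d f) =
      (∏ j, (t j : k) ^ fiberCard f j) • tensorPowerBasis k n d f := by
  have hsingle (i : Fin d) :
      Pi.single (f i) (t (f i) * 1 : k) = (t (f i) : k) • Pi.single (f i) 1 := by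
    rw [← smul_eq_mul, Pi.single_smul']
  simp only [tensorPowerBasis_apply, diagAction, map_tprod, Matrix.mulVecLin_apply,
    Matrix.diagonal_mulVec_single, hsingle, MultilinearMap.map_smul_univ,
    prod_comp_eq_prod_pow_fiberCard f fun j => (t j : k)]

lemma permAction_tensorPowerBasis (σ : Equiv.Perm (Fin d)) (f : Fin d → Fin n) :
    permAction k (Fin n → k) σ (tensorPowerBasis k n d f) =
      tensorPowerBasis k n d (f ∘ σ.symm) := by
  simp [permAction, tensorPowerBasis_apply, reindex_tprod]

variable (k n d) in
noncomputable def dividedPowerWeightSpace (lam : Fin n → ℕ) : Submodule k (⨂[k]^d (Fin n → k)) :=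
  dividedPower k (Fin n → k) d ⊓
    ⨅ t : Fin n → kˣ,
      LinearMap.eqLocus (diagAction k n d t) ((∏ i, (t i : k) ^ lam i) • LinearMap.id)

variable {lam : Fin n → ℕ}

lemma mem_dividedPowerWeightSpace_iff {x : ⨂[k]^d (Fin n → k)} :
    x ∈ dividedPowerWeightSpace k n d lam ↔ x ∈ dividedPower k (Fin n → k) d ∧
      ∀ t : Fin n → kˣ, diagAction k n d t x = (∏ i, (t i : k) ^ lam i) • x := by
  simp [dividedPowerWeightSpace, Submodule.mem_iInf]

lemma tensorPowerBasis_repr_diagAction (t : Fin n → kˣ) (x : ⨂[k]^d (Fin n → k))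
    (f : Fin d → Fin n) :
    (tensorPowerBasis k n d).repr (diagAction k n d t x) f =
      (∏ j, (t j : k) ^ fiberCard f j) * (tensorPowerBasis k n d).repr x f :=
  (tensorPowerBasis k n d).repr_map_of_apply_eq_smul (diagAction_tensorPowerBasis t) x f

lemma tensorPowerBasis_repr_permAction (σ : Equiv.Perm (Fin d)) (x : ⨂[k]^d (Fin n → k))
    (f : Fin d → Fin n) :
    (tensorPowerBasis k n d).repr (permAction k (Fin n → k) σ x) f =
      (tensorPowerBasis k n d).repr x (f ∘ σ) :=
  (tensorPowerBasis k n d).repr_map_of_apply_eq_apply (e := σ.arrowCongr (Equiv.refl _))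
    (permAction_tensorPowerBasis σ) x f

lemma tensorPowerBasis_repr_eq_of_fiberCard_eq {x : ⨂[k]^d (Fin n → k)}
    (hx : x ∈ dividedPower k (Fin n → k) d) {f g : Fin d → Fin n}
    (h : fiberCard f = fiberCard g) :
    (tensorPowerBasis k n d).repr x f = (tensorPowerBasis k n d).repr x g := by
  obtain ⟨σ, rfl⟩ := exists_perm_eq_comp_of_fiberCard_eq h
  rw [← tensorPowerBasis_repr_permAction, mem_dividedPower_iff.1 hx]

lemma tensorPowerBasis_repr_eq_zero [Infinite k] {x : ⨂[k]^d (Fin n → k)}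
    (hx : x ∈ dividedPowerWeightSpace k n d lam) {f : Fin d → Fin n} (hf : fiberCard f ≠ lam) :
    (tensorPowerBasis k n d).repr x f = 0 := by
  by_contra hne
  refine hf (eq_of_forall_prod_pow_eq fun t => mul_right_cancel₀ hne ?_)
  rw [← tensorPowerBasis_repr_diagAction, (mem_dividedPowerWeightSpace_iff.1 hx).2 t]
  simp

variable (k n d lam) in
noncomputable def weightVector : ⨂[k]^d (Fin n → k) :=
  (tensorPowerBasis k n d).equivFun.symm fun f => if fiberCard f = lam then 1 else 0

lemma tensorPowerBasis_repr_weightVector (f : Fin d → Fin n) :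
    (tensorPowerBasis k n d).repr (weightVector k n d lam) f =
      if fiberCard f = lam then 1 else 0 :=
  congrFun ((tensorPowerBasis k n d).equivFun.apply_symm_apply _) f

lemma weightVector_ne_zero {f₀ : Fin d → Fin n} (hf₀ : fiberCard f₀ = lam) :
    weightVector k n d lam ≠ 0 := fun h => by
  simpa [h, hf₀] using tensorPowerBasis_repr_weightVector (k := k) (lam := lam) f₀

lemma weightVector_mem : weightVector k n d lam ∈ dividedPowerWeightSpace k n d lam := by
  refine mem_dividedPowerWeightSpace_iff.2 ⟨mem_dividedPower_iff.2 fun σ => ?_, fun t => ?_⟩ <;>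
    refine (tensorPowerBasis k n d).ext_elem fun f => ?_
  · rw [tensorPowerBasis_repr_permAction, tensorPowerBasis_repr_weightVector,
      tensorPowerBasis_repr_weightVector, fiberCard_comp_perm]
  · rw [tensorPowerBasis_repr_diagAction, map_smul, Finsupp.smul_apply,
      tensorPowerBasis_repr_weightVector]
    split_ifs with hf <;> simp [hf]

lemma dividedPowerWeightSpace_eq_span [Infinite k] {f₀ : Fin d → Fin n}
    (hf₀ : fiberCard f₀ = lam) :
    dividedPowerWeightSpace k n d lam = Submodule.span k {weightVector k n d lam} := by
  refine le_antisymm (fun x hx => Submodule.mem_span_singleton.2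
    ⟨(tensorPowerBasis k n d).repr x f₀, (tensorPowerBasis k n d).ext_elem fun f => ?_⟩) ?_
  · rw [map_smul, Finsupp.smul_apply, tensorPowerBasis_repr_weightVector]
    split_ifs with hf
    · simp [tensorPowerBasis_repr_eq_of_fiberCard_eq (mem_dividedPowerWeightSpace_iff.1 hx).1
        (hf.trans hf₀.symm)]
    · simp [tensorPowerBasis_repr_eq_zero hx hf]
  · exact (Submodule.span_singleton_le_iff_mem _ _).2 weightVector_mem

end TensorPower

theorem stmt_5_general (k : Type*) [Field k] [Infinite k] (n d : ℕ)
    (lam : Fin n → ℕ) (hlam : ∑ i, lam i = d) :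
    Module.finrank k
      (dividedPower k (Fin n → k) d ⊓
        ⨅ t : Fin n → kˣ,
          LinearMap.eqLocus (diagAction k n d t)
            ((∏ i, (t i : k) ^ lam i) • LinearMap.id) : Submodule k _) = 1 := by
  obtain ⟨f₀, hf₀⟩ := exists_fiberCard_eq (ι := Fin d) lam (by simpa using hlam)
  change Module.finrank k (dividedPowerWeightSpace k n d lam) = 1
  rw [dividedPowerWeightSpace_eq_span hf₀, finrank_span_singleton (weightVector_ne_zero hf₀)]

/-- let `k` be an infinite field, `n, d ≥ 1`, and `λ : Fin n → ℕ` with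
`λ₁ + ⋯ + λₙ = d`. Then the weight space
`W_λ = {x ∈ Γᵈ(kⁿ) : diag(t)·x = (∏ tᵢ^λᵢ) x for all t ∈ (kˣ)ⁿ}` has dimension
exactly `1`. -/
theorem stmt_5 (k : Type*) [Field k] [Infinite k] (n d : ℕ) (hn : 1 ≤ n) (hd : 1 ≤ d)
    (lam : Fin n → ℕ) (hlam : ∑ i, lam i = d) :
    Module.finrank k
      (dividedPower k (Fin n → k) d ⊓
        ⨅ t : Fin n → kˣ,
          LinearMap.eqLocus (diagAction k n d t)
            ((∏ i, (t i : k) ^ lam i) • LinearMap.id) : Submodule k _) = 1 :=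
  stmt_5_general k n d lam hlam
end

section
/- Let k be a field of characteristic 2, let m ≥ 1, n ≥ 1, and let R = k[x_1, …, x_m, y_1, …, y_m] be a polynomial ring. Define the k-linear operator d = Σ_{i=1}^{m} y_i · ∂/∂x_i on R. Then: (a) d ∘ d = 0; (b) for 0 ≤ j ≤ 2n, letting C^j denote the k-span of monomials of total degree 2n − j in the variables x_1, …, x_m and total degree j in the variables y_1, …, y_m, one has d(C^j) ⊆ C^{j+1}; (c) the kernel of d restricted to C^0 equals the k-linear span of the squares g² of homogeneous polynomials g of degree n in x_1, …, x_m; and (d) for 1 ≤ j ≤ 2n, the kernel of d restricted to C^j equals d(C^{j−1}). -/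
/-- The operator `d = Σᵢ yᵢ ∂/∂xᵢ` on the polynomial ring
`R = k[x₁, …, x_m, y₁, …, y_m]`, where `xᵢ = X (inl i)` and `yᵢ = X (inr i)`. -/
noncomputable def koszulD (k : Type*) [CommRing k] (m : ℕ) :
    MvPolynomial (Fin m ⊕ Fin m) k →ₗ[k] MvPolynomial (Fin m ⊕ Fin m) k :=
  ∑ i : Fin m,
    (MvPolynomial.X (Sum.inr i) : MvPolynomial (Fin m ⊕ Fin m) k) •
      ((MvPolynomial.pderiv (Sum.inl i) :
          Derivation k (MvPolynomial (Fin m ⊕ Fin m) k)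
            (MvPolynomial (Fin m ⊕ Fin m) k)).toLinearMap)

/-- The `k`-span of the monomials of total degree `a` in the variables `x₁, …, x_m`
(the `inl` variables) and total degree `b` in the variables `y₁, …, y_m`
(the `inr` variables). -/
noncomputable def biComponent (k : Type*) [CommRing k] (m : ℕ) (a b : ℕ) :
    Submodule k (MvPolynomial (Fin m ⊕ Fin m) k) :=
  Submodule.span k
    {q | ∃ s : (Fin m ⊕ Fin m) →₀ ℕ, q = MvPolynomial.monomial s (1 : k) ∧
      (∑ i : Fin m, s (Sum.inl i)) = a ∧ (∑ i : Fin m, s (Sum.inr i)) = b}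

/-!
In characteristic 2, `d` sends a monomial to the sum of the monomials obtained from it by trading
one `xᵢ` for a `yᵢ`, over the indices `i` whose `xᵢ`-exponent is odd. Being a derivation, `d` has a
square which is again a derivation (the cross term `2 d(f) d(g)` vanishes) and which kills every
variable; hence `d² = 0`.

Exactness comes from an explicit contracting homotopy, the monomial form of the Künneth argument
for the tensor product of the one-variable complexes `k[xᵢ, yᵢ]`. Call `i` a defect of a monomial
if its `yᵢ`-exponent is positive or its `xᵢ`-exponent is odd. The homotopy `h` trades one `yᵢ` for
an `xᵢ` at the first defect `i` when the `xᵢ`-exponent there is even, and is zero otherwise. With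
`π` the projection onto the defect-free monomials, i.e. onto the squares of monomials in `x`, one
checks `π + d h + h d = id` monomial by monomial. Since `h` lowers the `y`-degree by one and `π`
vanishes in positive `y`-degree, a cycle of positive `y`-degree is a boundary, and a cycle of
`y`-degree `0` is a combination of squares.
-/

open MvPolynomial

def Derivation.sqOfCharTwo {R A : Type*} [CommRing R] [CommRing A] [Algebra R A] [CharP A 2]
    (D : Derivation R A A) : Derivation R A A :=
  Derivation.mk' ((D : A →ₗ[R] A) ∘ₗ D) fun a b => by
    simp only [LinearMap.comp_apply, Derivation.coeFn_coe, Derivation.leibniz, map_add,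
      smul_eq_mul]
    linear_combination (D a * D b) * CharTwo.two_eq_zero (R := A)

namespace KoszulCharTwo

variable {k : Type*} [CommRing k] {m : ℕ}

theorem koszulD_apply (f : MvPolynomial (Fin m ⊕ Fin m) k) :
    koszulD k m f = ∑ i, X (Sum.inr i) * pderiv (Sum.inl i) f := by
  simp [koszulD, smul_eq_mul]

variable (k m) in
noncomputable def koszulDerivation :
    Derivation k (MvPolynomial (Fin m ⊕ Fin m) k) (MvPolynomial (Fin m ⊕ Fin m) k) :=
  Derivation.mk' (koszulD k m) fun f g => by
    simp only [koszulD_apply, Derivation.leibniz, smul_eq_mul, Finset.mul_sum,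
      ← Finset.sum_add_distrib]
    exact Finset.sum_congr rfl fun i _ => by ring

theorem koszulD_comp_koszulD [CharP k 2] : koszulD k m ∘ₗ koszulD k m = 0 :=
  LinearMap.ext fun _ => derivation_eq_zero_of_forall_mem_vars
    (D := (koszulDerivation k m).sqOfCharTwo) fun i _ => by
      rcases i with i | i <;>
        simp [Derivation.sqOfCharTwo, koszulDerivation, koszulD_apply, pderiv_X, Pi.single_apply]

theorem koszulD_sq [CharP k 2] (g : MvPolynomial (Fin m ⊕ Fin m) k) :
    koszulD k m (g ^ 2) = 0 := by
  have := (koszulDerivation k m).leibniz_pow g 2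
  simp only [koszulDerivation, Derivation.coe_mk'] at this
  rw [this, CharTwo.two_nsmul]

theorem sum_add_apply_eq_of_forall_ne {ι : Type*} [Fintype ι] [DecidableEq ι] {f g : ι → ℕ}
    {i : ι} (h : ∀ j ≠ i, f j = g j) : ∑ j, f j + g i = ∑ j, g j + f i := by
  rw [← Finset.add_sum_erase _ f (Finset.mem_univ i),
    ← Finset.add_sum_erase _ g (Finset.mem_univ i),
    Finset.sum_congr rfl fun j hj => h j (Finset.ne_of_mem_erase hj)]
  ring

section Exponents

variable (i : Fin m) (s : Fin m ⊕ Fin m →₀ ℕ)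

noncomputable def xToY : Fin m ⊕ Fin m →₀ ℕ :=
  s - Finsupp.single (Sum.inl i) 1 + Finsupp.single (Sum.inr i) 1

noncomputable def yToX : Fin m ⊕ Fin m →₀ ℕ :=
  s - Finsupp.single (Sum.inr i) 1 + Finsupp.single (Sum.inl i) 1

@[simp] theorem xToY_inl (j : Fin m) :
    xToY i s (Sum.inl j) = if j = i then s (Sum.inl i) - 1 else s (Sum.inl j) := by
  rcases eq_or_ne j i with rfl | h
  · simp [xToY]
  · simp [xToY, h]

@[simp] theorem xToY_inr (j : Fin m) :
    xToY i s (Sum.inr j) = if j = i then s (Sum.inr i) + 1 else s (Sum.inr j) := by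
  rcases eq_or_ne j i with rfl | h
  · simp [xToY]
  · simp [xToY, h]

@[simp] theorem yToX_inl (j : Fin m) :
    yToX i s (Sum.inl j) = if j = i then s (Sum.inl i) + 1 else s (Sum.inl j) := by
  rcases eq_or_ne j i with rfl | h
  · simp [yToX]
  · simp [yToX, h]

@[simp] theorem yToX_inr (j : Fin m) :
    yToX i s (Sum.inr j) = if j = i then s (Sum.inr i) - 1 else s (Sum.inr j) := by
  rcases eq_or_ne j i with rfl | h
  · simp [yToX]
  · simp [yToX, h]

variable {s} in
theorem yToX_xToY (h : s (Sum.inl i) ≠ 0) : yToX i (xToY i s) = s := by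
  ext (j | j) <;> by_cases hj : j = i <;>
    simp [hj, Nat.sub_add_cancel (Nat.one_le_iff_ne_zero.mpr h)]

variable {s} in
theorem xToY_yToX (h : s (Sum.inr i) ≠ 0) : xToY i (yToX i s) = s := by
  ext (j | j) <;> by_cases hj : j = i <;>
    simp [hj, Nat.sub_add_cancel (Nat.one_le_iff_ne_zero.mpr h)]

theorem yToX_xToY_comm {i l : Fin m} (h : i ≠ l) : yToX i (xToY l s) = xToY l (yToX i s) := by
  ext (j | j) <;> by_cases hi : j = i <;> by_cases hl : j = l <;> simp_all

def xDeg : ℕ := ∑ j, s (Sum.inl j)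

def yDeg : ℕ := ∑ j, s (Sum.inr j)

variable {s} in
theorem xDeg_xToY (h : s (Sum.inl i) ≠ 0) : xDeg (xToY i s) + 1 = xDeg s := by
  have := sum_add_apply_eq_of_forall_ne (f := fun j => xToY i s (Sum.inl j))
    (g := fun j => s (Sum.inl j)) (i := i) fun j hj => by simp [hj]
  rw [xToY_inl i s i, if_pos rfl] at this
  unfold xDeg; omega

theorem yDeg_xToY : yDeg (xToY i s) = yDeg s + 1 := by
  have := sum_add_apply_eq_of_forall_ne (f := fun j => xToY i s (Sum.inr j))
    (g := fun j => s (Sum.inr j)) (i := i) fun j hj => by simp [hj]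
  rw [xToY_inr i s i, if_pos rfl] at this
  unfold yDeg; omega

theorem xDeg_yToX : xDeg (yToX i s) = xDeg s + 1 := by
  have := sum_add_apply_eq_of_forall_ne (f := fun j => yToX i s (Sum.inl j))
    (g := fun j => s (Sum.inl j)) (i := i) fun j hj => by simp [hj]
  rw [yToX_inl i s i, if_pos rfl] at this
  unfold xDeg; omega

variable {s} in
theorem yDeg_yToX (h : s (Sum.inr i) ≠ 0) : yDeg (yToX i s) + 1 = yDeg s := by
  have := sum_add_apply_eq_of_forall_ne (f := fun j => yToX i s (Sum.inr j))
    (g := fun j => s (Sum.inr j)) (i := i) fun j hj => by simp [hj]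
  rw [yToX_inr i s i, if_pos rfl] at this
  unfold yDeg; omega

end Exponents

def oddX (s : Fin m ⊕ Fin m →₀ ℕ) : Finset (Fin m) := {l | Odd (s (Sum.inl l))}

theorem koszulD_monomial [CharP k 2] (s : Fin m ⊕ Fin m →₀ ℕ) (c : k) :
    koszulD k m (monomial s c) = ∑ l ∈ oddX s, monomial (xToY l s) c := by
  have hterm (i : Fin m) : X (Sum.inr i) * pderiv (Sum.inl i) (monomial s c) =
      monomial (xToY i s) (c * (s (Sum.inl i) : k)) := by
    rw [pderiv_monomial, X, monomial_mul, one_mul, add_comm]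
    rfl
  rw [koszulD_apply, Finset.sum_congr rfl fun i _ => hterm i, oddX, Finset.sum_filter]
  refine Finset.sum_congr rfl fun i _ => ?_
  rw [CharTwo.natCast_eq_ite]
  split_ifs <;> simp_all [← Nat.not_even_iff_odd]

section Homotopy

variable {s : Fin m ⊕ Fin m →₀ ℕ} {i l : Fin m}

def defects (s : Fin m ⊕ Fin m →₀ ℕ) : Finset (Fin m) :=
  {i | s (Sum.inr i) ≠ 0 ∨ Odd (s (Sum.inl i))}

theorem mem_defects : i ∈ defects s ↔ s (Sum.inr i) ≠ 0 ∨ Odd (s (Sum.inl i)) := by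
  simp [defects]

theorem oddX_subset_defects : oddX s ⊆ defects s := fun _ h =>
  mem_defects.mpr (Or.inr (by simpa [oddX] using h))

-- At a defect whose `xᵢ`-exponent is even, the `yᵢ`-exponent is positive.
variable (k) in
noncomputable def homotopyMono (s : Fin m ⊕ Fin m →₀ ℕ) :
    MvPolynomial (Fin m ⊕ Fin m) k :=
  if h : (defects s).Nonempty then
    if Even (s (Sum.inl ((defects s).min' h))) then monomial (yToX ((defects s).min' h) s) 1
    else 0
  else 0

theorem homotopyMono_of_isLeast (h : IsLeast (defects s : Set (Fin m)) i) :
    homotopyMono k s = if Even (s (Sum.inl i)) then monomial (yToX i s) 1 else 0 := by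
  have hne : (defects s).Nonempty := ⟨i, h.1⟩
  rw [homotopyMono, dif_pos hne, ((defects s).isLeast_min' hne).unique h]

theorem homotopyMono_eq_zero_or (s : Fin m ⊕ Fin m →₀ ℕ) :
    homotopyMono k s = 0 ∨
      ∃ i, s (Sum.inr i) ≠ 0 ∧ homotopyMono k s = monomial (yToX i s) 1 := by
  by_cases hne : (defects s).Nonempty
  · have hleast := (defects s).isLeast_min' hne
    rw [homotopyMono_of_isLeast hleast]
    split_ifs with heven
    · refine Or.inr ⟨_, ?_, rfl⟩
      simpa [← Nat.not_even_iff_odd, heven] using mem_defects.mp hleast.1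
    · exact Or.inl rfl
  · simp [homotopyMono, hne]

theorem isLeast_defects_xToY_of_lt (h : IsLeast (defects s : Set (Fin m)) i) (hil : i < l) :
    IsLeast (defects (xToY l s) : Set (Fin m)) i := by
  refine ⟨?_, fun j hj => ?_⟩
  · simpa [mem_defects, hil.ne] using h.1
  · by_contra hji
    have hjl : j ≠ l := fun hjl => hji (hjl ▸ hil.le)
    exact hji (h.2 (by simpa [mem_defects, hjl] using hj))

theorem isLeast_defects_xToY_self (h : IsLeast (defects s : Set (Fin m)) i) :
    IsLeast (defects (xToY i s) : Set (Fin m)) i := by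
  refine ⟨by simp [mem_defects], fun j hj => ?_⟩
  by_contra hji
  have hj' : j ≠ i := fun hj' => hji hj'.ge
  exact hji (h.2 (by simpa [mem_defects, hj'] using hj))

variable (k m) in
noncomputable def koszulHomotopy :
    MvPolynomial (Fin m ⊕ Fin m) k →ₗ[k] MvPolynomial (Fin m ⊕ Fin m) k :=
  (basisMonomials (Fin m ⊕ Fin m) k).constr k (homotopyMono k)

variable (k m) in
noncomputable def cycleProj :
    MvPolynomial (Fin m ⊕ Fin m) k →ₗ[k] MvPolynomial (Fin m ⊕ Fin m) k :=
  (basisMonomials (Fin m ⊕ Fin m) k).constr k fun s =>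
    if defects s = ∅ then monomial s 1 else 0

theorem koszulHomotopy_monomial (s : Fin m ⊕ Fin m →₀ ℕ) :
    koszulHomotopy k m (monomial s 1) = homotopyMono k s := by
  simpa [koszulHomotopy] using
    (basisMonomials (Fin m ⊕ Fin m) k).constr_basis k (homotopyMono k) s

theorem cycleProj_monomial (s : Fin m ⊕ Fin m →₀ ℕ) :
    cycleProj k m (monomial s 1) = if defects s = ∅ then monomial s 1 else 0 := by
  simpa [cycleProj] using (basisMonomials (Fin m ⊕ Fin m) k).constr_basis k
    (fun s => if defects s = ∅ then monomial s (1 : k) else 0) s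

theorem homotopyMono_xToY_of_mem_oddX (h : IsLeast (defects s : Set (Fin m)) i)
    (hl : l ∈ oddX s) (hli : l ≠ i) :
    homotopyMono k (xToY l s) =
      if Even (s (Sum.inl i)) then monomial (yToX i (xToY l s)) 1 else 0 := by
  have hil : i < l := lt_of_le_of_ne (h.2 (oddX_subset_defects hl)) hli.symm
  simp [homotopyMono_of_isLeast (isLeast_defects_xToY_of_lt h hil), hli.symm]

variable [CharP k 2]

theorem koszulHomotopy_koszulD_monomial (s : Fin m ⊕ Fin m →₀ ℕ) :
    koszulHomotopy k m (koszulD k m (monomial s 1)) =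
      ∑ l ∈ oddX s, homotopyMono k (xToY l s) := by
  simp only [koszulD_monomial, map_sum, koszulHomotopy_monomial]

theorem koszulHomotopy_spec_monomial_of_odd (h : IsLeast (defects s : Set (Fin m)) i)
    (hodd : Odd (s (Sum.inl i))) :
    koszulD k m (koszulHomotopy k m (monomial s 1)) +
      koszulHomotopy k m (koszulD k m (monomial s 1)) = monomial s 1 := by
  have hi : i ∈ oddX s := by simpa [oddX] using hodd
  have hterm : ∀ l ∈ oddX s, homotopyMono k (xToY l s) = if l = i then monomial s 1 else 0 := by
    intro l hl
    rcases eq_or_ne l i with rfl | hli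
    · rw [homotopyMono_of_isLeast (isLeast_defects_xToY_self h), xToY_inl, if_pos rfl,
        if_pos (Nat.Odd.sub_odd hodd odd_one), yToX_xToY _ hodd.pos.ne', if_pos rfl]
    · rw [homotopyMono_xToY_of_mem_oddX h hl hli, if_neg (Nat.not_even_iff_odd.mpr hodd),
        if_neg hli]
  rw [koszulHomotopy_monomial, homotopyMono_of_isLeast h, if_neg (Nat.not_even_iff_odd.mpr hodd),
    map_zero, zero_add, koszulHomotopy_koszulD_monomial, Finset.sum_congr rfl hterm,
    Finset.sum_ite_eq' _ _ _, if_pos hi]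

theorem koszulHomotopy_spec_monomial_of_even (h : IsLeast (defects s : Set (Fin m)) i)
    (heven : Even (s (Sum.inl i))) :
    koszulD k m (koszulHomotopy k m (monomial s 1)) +
      koszulHomotopy k m (koszulD k m (monomial s 1)) = monomial s 1 := by
  have hy : s (Sum.inr i) ≠ 0 := by
    simpa [← Nat.not_even_iff_odd, heven] using mem_defects.mp h.1
  have hi : i ∉ oddX s := by simpa [oddX, ← Nat.not_even_iff_odd] using heven
  have hodd : oddX (yToX i s) = insert i (oddX s) := by
    ext j
    rcases eq_or_ne j i with rfl | hji
    · simpa [oddX] using heven.add_one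
    · simp [oddX, hji]
  have hterm : ∀ l ∈ oddX s,
      homotopyMono k (xToY l s) = monomial (xToY l (yToX i s)) 1 := by
    intro l hl
    have hli : l ≠ i := ne_of_mem_of_not_mem hl hi
    rw [homotopyMono_xToY_of_mem_oddX h hl hli, if_pos heven, yToX_xToY_comm s hli.symm]
  rw [koszulHomotopy_monomial, homotopyMono_of_isLeast h, if_pos heven, koszulD_monomial, hodd,
    Finset.sum_insert hi, xToY_yToX _ hy, koszulHomotopy_koszulD_monomial,
    Finset.sum_congr rfl hterm, add_assoc, CharTwo.add_self_eq_zero, add_zero]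

theorem koszulHomotopy_spec :
    cycleProj k m + koszulD k m ∘ₗ koszulHomotopy k m + koszulHomotopy k m ∘ₗ koszulD k m =
      LinearMap.id := by
  refine (basisMonomials (Fin m ⊕ Fin m) k).ext fun s => ?_
  simp only [coe_basisMonomials, LinearMap.add_apply, LinearMap.comp_apply, LinearMap.id_apply,
    cycleProj_monomial]
  split_ifs with hs
  · have hodd : oddX s = ∅ := Finset.subset_empty.mp (hs ▸ oddX_subset_defects)
    simp [koszulHomotopy_monomial, homotopyMono, hs, koszulD_monomial, hodd]
  · obtain ⟨i, hleast⟩ : ∃ i, IsLeast (defects s : Set (Fin m)) i :=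
      ⟨_, (defects s).isLeast_min' (Finset.nonempty_iff_ne_empty.mpr hs)⟩
    rw [zero_add]
    by_cases heven : Even (s (Sum.inl i))
    · exact koszulHomotopy_spec_monomial_of_even hleast heven
    · exact koszulHomotopy_spec_monomial_of_odd hleast (Nat.not_even_iff_odd.mp heven)

end Homotopy

section Degrees

variable {a b : ℕ} {f : MvPolynomial (Fin m ⊕ Fin m) k}

theorem monomial_mem_biComponent {s : Fin m ⊕ Fin m →₀ ℕ} (c : k) (ha : xDeg s = a)
    (hb : yDeg s = b) : monomial s c ∈ biComponent k m a b := by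
  rw [← mul_one c, ← smul_eq_mul, ← smul_monomial]
  exact Submodule.smul_mem _ c (Submodule.subset_span ⟨s, rfl, ha, hb⟩)

theorem apply_mem_of_mem_biComponent
    {L : MvPolynomial (Fin m ⊕ Fin m) k →ₗ[k] MvPolynomial (Fin m ⊕ Fin m) k}
    {P : Submodule k (MvPolynomial (Fin m ⊕ Fin m) k)}
    (hL : ∀ s, xDeg s = a → yDeg s = b → L (monomial s 1) ∈ P)
    (hf : f ∈ biComponent k m a b) : L f ∈ P := by
  refine (Submodule.map_span_le L _ P).mpr ?_ (Submodule.mem_map_of_mem hf)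
  rintro _ ⟨s, rfl, ha, hb⟩
  exact hL s ha hb

theorem mul_mem_biComponent {a' b' : ℕ} {g : MvPolynomial (Fin m ⊕ Fin m) k}
    (hf : f ∈ biComponent k m a b) (hg : g ∈ biComponent k m a' b') :
    f * g ∈ biComponent k m (a + a') (b + b') := by
  have hfg := Submodule.mul_mem_mul hf hg
  rw [biComponent, biComponent, Submodule.span_mul_span] at hfg
  refine Submodule.span_le.mpr ?_ hfg
  rintro _ ⟨_, ⟨s, rfl, hs₁, hs₂⟩, _, ⟨t, rfl, ht₁, ht₂⟩, rfl⟩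
  simp only [SetLike.mem_coe, monomial_mul, one_mul]
  apply monomial_mem_biComponent
  · simp [xDeg, Finset.sum_add_distrib, ← hs₁, ← ht₁]
  · simp [yDeg, Finset.sum_add_distrib, ← hs₂, ← ht₂]

theorem koszulD_mem_biComponent [CharP k 2] (hf : f ∈ biComponent k m a b) :
    koszulD k m f ∈ biComponent k m (a - 1) (b + 1) := by
  refine apply_mem_of_mem_biComponent (fun s ha hb => ?_) hf
  rw [koszulD_monomial]
  refine Submodule.sum_mem _ fun l hl => monomial_mem_biComponent _ ?_ (by rw [yDeg_xToY, hb])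
  have := xDeg_xToY l (Finset.mem_filter.mp hl).2.pos.ne'
  omega

theorem koszulHomotopy_mem_biComponent (hf : f ∈ biComponent k m a (b + 1)) :
    koszulHomotopy k m f ∈ biComponent k m (a + 1) b := by
  refine apply_mem_of_mem_biComponent (fun s ha hb => ?_) hf
  rw [koszulHomotopy_monomial]
  rcases homotopyMono_eq_zero_or (k := k) s with h | ⟨i, hi, h⟩
  · exact h ▸ Submodule.zero_mem _
  · rw [h]
    refine monomial_mem_biComponent _ (by rw [xDeg_yToX, ha]) ?_
    have := yDeg_yToX i hi
    omega

theorem koszulHomotopy_eq_zero_of_mem (hf : f ∈ biComponent k m a 0) :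
    koszulHomotopy k m f = 0 := by
  refine (Submodule.mem_bot k).mp (apply_mem_of_mem_biComponent (fun s _ hb => ?_) hf)
  rw [koszulHomotopy_monomial]
  rcases homotopyMono_eq_zero_or (k := k) s with h | ⟨i, hi, -⟩
  · exact h ▸ Submodule.zero_mem _
  · exact absurd (Finset.sum_eq_zero_iff.mp hb i (Finset.mem_univ i)) hi

theorem cycleProj_eq_zero_of_mem (hf : f ∈ biComponent k m a (b + 1)) : cycleProj k m f = 0 := by
  refine (Submodule.mem_bot k).mp (apply_mem_of_mem_biComponent (fun s _ hb => ?_) hf)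
  obtain ⟨i, hi⟩ : ∃ i, s (Sum.inr i) ≠ 0 := by
    by_contra! h
    simp [yDeg, h] at hb
  have : defects s ≠ ∅ := Finset.ne_empty_of_mem (mem_defects.mpr (Or.inl hi))
  simp [cycleProj_monomial, this]

theorem cycleProj_mem_span_sq (hf : f ∈ biComponent k m (2 * a) 0) :
    cycleProj k m f ∈ Submodule.span k ((· ^ 2) '' (biComponent k m a 0 : Set _)) := by
  refine apply_mem_of_mem_biComponent (fun s ha hb => ?_) hf
  rw [cycleProj_monomial]
  split_ifs with hs
  swap
  · exact Submodule.zero_mem _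
  have hgood (i : Fin m) : s (Sum.inr i) = 0 ∧ Even (s (Sum.inl i)) := by
    simpa [mem_defects] using Finset.eq_empty_iff_forall_notMem.mp hs i
  have hs_even (c : Fin m ⊕ Fin m) : 2 * (s c / 2) = s c := by
    rcases c with i | i
    · exact Nat.two_mul_div_two_of_even (hgood i).2
    · simp [(hgood i).1]
  set t : Fin m ⊕ Fin m →₀ ℕ := s.mapRange (· / 2) (Nat.zero_div 2)
  have hst : s = 2 • t := by ext c; simp [t, hs_even]
  have hxy : xDeg s = 2 * xDeg t ∧ yDeg s = 2 * yDeg t := by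
    rw [hst]; simp [xDeg, yDeg, Finset.mul_sum]
  refine Submodule.subset_span ⟨monomial t 1, monomial_mem_biComponent _ ?_ ?_, ?_⟩
  · omega
  · omega
  · simp [monomial_pow, ← hst]

end Degrees

section Exactness

variable [CharP k 2]

theorem koszulHomotopy_spec_apply (f : MvPolynomial (Fin m ⊕ Fin m) k) :
    cycleProj k m f + koszulD k m (koszulHomotopy k m f) + koszulHomotopy k m (koszulD k m f) =
      f :=
  LinearMap.congr_fun koszulHomotopy_spec f

theorem biComponent_zero_inf_ker_koszulD (a : ℕ) :
    biComponent k m (2 * a) 0 ⊓ LinearMap.ker (koszulD k m) =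
      Submodule.span k ((· ^ 2) '' (biComponent k m a 0 : Set _)) := by
  apply le_antisymm
  · rintro f ⟨hf, hdf : koszulD k m f = 0⟩
    have hf_eq := koszulHomotopy_spec_apply f
    rw [hdf, koszulHomotopy_eq_zero_of_mem hf, map_zero, map_zero, add_zero, add_zero] at hf_eq
    exact hf_eq ▸ cycleProj_mem_span_sq hf
  · refine Submodule.span_le.mpr ?_
    rintro _ ⟨g, hg, rfl⟩
    refine ⟨?_, koszulD_sq g⟩
    simpa [two_mul, sq] using mul_mem_biComponent hg hg

theorem biComponent_succ_inf_ker_koszulD (a b : ℕ) :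
    biComponent k m a (b + 1) ⊓ LinearMap.ker (koszulD k m) =
      (biComponent k m (a + 1) b).map (koszulD k m) := by
  apply le_antisymm
  · rintro f ⟨hf, hdf : koszulD k m f = 0⟩
    have hf_eq := koszulHomotopy_spec_apply f
    rw [hdf, cycleProj_eq_zero_of_mem hf, map_zero, zero_add, add_zero] at hf_eq
    exact ⟨_, koszulHomotopy_mem_biComponent hf, hf_eq⟩
  · rintro _ ⟨g, hg, rfl⟩
    refine ⟨by simpa using koszulD_mem_biComponent hg, ?_⟩
    exact LinearMap.mem_ker.mpr (LinearMap.congr_fun koszulD_comp_koszulD g)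

end Exactness

end KoszulCharTwo

open KoszulCharTwo

theorem stmt_7_general (k : Type*) [Field k] [CharP k 2] (m n : ℕ) :
    (koszulD k m ∘ₗ koszulD k m = 0) ∧
    (∀ j : ℕ, j ≤ 2 * n →
      Submodule.map (koszulD k m) (biComponent k m (2 * n - j) j) ≤
        biComponent k m (2 * n - (j + 1)) (j + 1)) ∧
    (biComponent k m (2 * n) 0 ⊓ LinearMap.ker (koszulD k m) =
      Submodule.span k
        ((fun g : MvPolynomial (Fin m ⊕ Fin m) k => g ^ 2) ''
          (biComponent k m n 0 : Set (MvPolynomial (Fin m ⊕ Fin m) k)))) ∧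
    (∀ j : ℕ, 1 ≤ j → j ≤ 2 * n →
      biComponent k m (2 * n - j) j ⊓ LinearMap.ker (koszulD k m) =
        Submodule.map (koszulD k m) (biComponent k m (2 * n - (j - 1)) (j - 1))) := by
  refine ⟨koszulD_comp_koszulD, fun j _ => ?_, biComponent_zero_inf_ker_koszulD n,
    fun j hj _ => ?_⟩
  · rintro _ ⟨f, hf, rfl⟩
    simpa [Nat.sub_sub] using koszulD_mem_biComponent hf
  · obtain ⟨b, rfl⟩ := Nat.exists_eq_add_of_le' hj
    rw [Nat.add_sub_cancel, show 2 * n - b = 2 * n - (b + 1) + 1 by omega]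
    exact biComponent_succ_inf_ker_koszulD _ b

/-- over a field `k` of characteristic 2, with `R = k[x₁,…,x_m,y₁,…,y_m]`,
`d = Σᵢ yᵢ ∂/∂xᵢ`, and `Cʲ` the span of monomials of `x`-degree `2n − j` and `y`-degree
`j`: (a) `d ∘ d = 0`; (b) `d(Cʲ) ⊆ Cʲ⁺¹` for `0 ≤ j ≤ 2n`; (c) the kernel of `d`
restricted to `C⁰` is the span of the squares `g²` of homogeneous polynomials `g` of
degree `n` in the `x` variables; (d) for `1 ≤ j ≤ 2n` the kernel of `d` restricted to
`Cʲ` equals `d(Cʲ⁻¹)`. -/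
theorem stmt_7 (k : Type*) [Field k] [CharP k 2] (m n : ℕ) (hm : 1 ≤ m) (hn : 1 ≤ n) :
    (koszulD k m ∘ₗ koszulD k m = 0) ∧
    (∀ j : ℕ, j ≤ 2 * n →
      Submodule.map (koszulD k m) (biComponent k m (2 * n - j) j) ≤
        biComponent k m (2 * n - (j + 1)) (j + 1)) ∧
    (biComponent k m (2 * n) 0 ⊓ LinearMap.ker (koszulD k m) =
      Submodule.span k
        ((fun g : MvPolynomial (Fin m ⊕ Fin m) k => g ^ 2) ''
          (biComponent k m n 0 : Set (MvPolynomial (Fin m ⊕ Fin m) k)))) ∧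
    (∀ j : ℕ, 1 ≤ j → j ≤ 2 * n →
      biComponent k m (2 * n - j) j ⊓ LinearMap.ker (koszulD k m) =
        Submodule.map (koszulD k m) (biComponent k m (2 * n - (j - 1)) (j - 1))) :=
  stmt_7_general k m n
end

section
/- Let A be an abelian category and let C, D, E be ℤ-indexed cochain complexes in A. Let f : C → D be a quasi-isomorphism such that each component fⁿ : Cⁿ → Dⁿ is a monomorphism, and let g : C → E be an arbitrary cochain map. Let F be the cokernel of the cochain map (f, −g) : C → D ⊕ E. Then the canonical cochain map E → F (the composite of the inclusion E → D ⊕ E with the quotient map) is a quasi-isomorphism, and each of its components is a monomorphism. -/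
/-!
The square formed by `f`, `g` and the two maps into `F = coker (f, -g)` is a pushout square in
the abelian category of cochain complexes. Pushing out a monomorphism `t` along `l` yields a short
exact sequence `0 → X₃ → X₄ → coker t → 0`, here `0 → E → F → coker f → 0`. As `f` is a monic
quasi-isomorphism, `coker f` is acyclic, so the long exact homology sequence makes `E → F` a
quasi-isomorphism.
-/

open CategoryTheory Limits

namespace CategoryTheory

variable {C : Type*} [Category C]

lemma IsPushout.of_cokernel_biprod_lift [Preadditive C] {X Y Z : C} (a : X ⟶ Y) (b : X ⟶ Z)
    [HasBinaryBiproduct Y Z] [HasCokernel (biprod.lift a (-b))] :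
    IsPushout a b (biprod.inl ≫ cokernel.π (biprod.lift a (-b)))
      (biprod.inr ≫ cokernel.π (biprod.lift a (-b))) := by
  have sq : CommSq a b (biprod.inl ≫ cokernel.π (biprod.lift a (-b)))
      (biprod.inr ≫ cokernel.π (biprod.lift a (-b))) := ⟨by
    rw [← sub_eq_zero]
    simpa [sub_eq_add_neg, biprod.lift_eq] using cokernel.condition (biprod.lift a (-b))⟩
  refine ⟨sq, ⟨sq.isColimitEquivIsColimitCokernelCofork.symm ?_⟩⟩
  exact IsColimit.ofIsoColimit (cokernelIsCokernel _)
    (Cofork.ext (Iso.refl _) (by ext <;> simp))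

namespace IsPushout

variable [Abelian C] {X₁ X₂ X₃ X₄ : C} {t : X₁ ⟶ X₂} {l : X₁ ⟶ X₃} {r : X₂ ⟶ X₄} {b : X₃ ⟶ X₄}

noncomputable abbrev cokernelSequence (h : IsPushout t l r b) : ShortComplex C :=
  ShortComplex.mk b (h.desc (cokernel.π t) 0 (by simp)) (by simp)

lemma shortExact_cokernelSequence (h : IsPushout t l r b) [Mono t] :
    h.cokernelSequence.ShortExact where
  mono_f := MorphismProperty.of_isPushout (P := .monomorphisms C) h.flip ‹Mono t›
  epi_g := epi_of_epi_fac (h.inl_desc (cokernel.π t) 0 (by simp))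
  exact := by
    rw [ShortComplex.exact_iff_exact_up_to_refinements]
    intro T x₄ hx₄
    -- Locally `x₄ = x₂ ≫ r + x₃ ≫ b`; then `x₂` dies in `coker t`, so locally `x₂ = x₁ ≫ t`,
    -- and `x₁ ≫ t ≫ r = x₁ ≫ l ≫ b`.
    obtain ⟨T₁, π₁, _, x₂, x₃, hx⟩ := h.hom_eq_add_up_to_refinements x₄
    have hx₂ : x₂ ≫ cokernel.π t = 0 := by
      simpa [reassoc_of% hx] using π₁ ≫= hx₄
    obtain ⟨T₂, π₂, _, x₁, hx₁⟩ := (ShortComplex.exact_cokernel t).exact_up_to_refinements x₂ hx₂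
    refine ⟨T₂, π₂ ≫ π₁, inferInstance, x₁ ≫ l + π₂ ≫ x₃, ?_⟩
    dsimp at hx₁ ⊢
    rw [Category.assoc, hx, Preadditive.comp_add, ← Category.assoc, hx₁, Category.assoc,
      h.w, Preadditive.add_comp]
    simp

end IsPushout

lemma ShortComplex.ShortExact.quasiIso_f_of_acyclic_X₃ [Abelian C] {ι : Type*}
    {c : ComplexShape ι} {S : ShortComplex (HomologicalComplex C c)} (hS : S.ShortExact)
    (h : S.X₃.Acyclic) : _root_.QuasiIso S.f := by
  rw [_root_.quasiIso_iff]
  intro j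
  rw [quasiIsoAt_iff_isIso_homologyMap]
  have hzero : ∀ i, IsZero (S.X₃.homology i) := fun i ↦ (h i).isZero_homology
  have : Epi (HomologicalComplex.homologyMap S.f j) :=
    (hS.homology_exact₂ j).epi_f ((hzero j).eq_of_tgt _ _)
  have : Mono (HomologicalComplex.homologyMap S.f j) := by
    by_cases! hj : ∃ i, c.Rel i j
    · obtain ⟨i, hij⟩ := hj
      exact (hS.homology_exact₁ i j hij).mono_g ((hzero i).eq_of_src _ _)
    · have := hS.mono_f
      exact HomologicalComplex.mono_homologyMap_of_mono_of_not_rel S.f j hj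
  exact isIso_of_mono_of_epi _

end CategoryTheory

/-- Let `A` be an abelian category, `f : C ⟶ D` a quasi-isomorphism of
cochain complexes with monomorphism components, and `g : C ⟶ E` any cochain map. Let `F`
be the cokernel of `(f, -g) : C ⟶ D ⊞ E`. Then the canonical map `E ⟶ F` is a
quasi-isomorphism with monomorphism components (the base change diagram). -/
theorem stmt_8 {A : Type*} [Category A] [Abelian A]
    (C D E : CochainComplex A ℤ)
    (f : C ⟶ D) (g : C ⟶ E)
    [QuasiIso f] (hf : ∀ n : ℤ, Mono (f.f n)) :
    QuasiIso (biprod.inr ≫ cokernel.π (biprod.lift f (-g)) :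
        E ⟶ cokernel (biprod.lift f (-g))) ∧
    ∀ n : ℤ, Mono ((biprod.inr ≫ cokernel.π (biprod.lift f (-g)) :
        E ⟶ cokernel (biprod.lift f (-g))).f n) := by
  have : Mono f := HomologicalComplex.mono_of_mono_f f hf
  have hf_shortExact : (ShortComplex.mk _ _ (cokernel.condition f)).ShortExact :=
    { exact := ShortComplex.exact_cokernel f }
  have hS := (IsPushout.of_cokernel_biprod_lift f g).shortExact_cokernelSequence
  have := hS.mono_f
  exact ⟨hS.quasiIso_f_of_acyclic_X₃ (hf_shortExact.acyclic_X₃ ‹_›), fun n ↦ inferInstance⟩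
end

section
/- Let A be an abelian category, let J and C be bounded below ℤ-indexed cochain complexes in A with every object Jⁱ injective, and let f : J → C be a quasi-isomorphism. Then there exists a cochain map g : C → J such that g ∘ f is homotopic to the identity of J; that is, f is a split monomorphism in the homotopy category of bounded below cochain complexes. -/
open CategoryTheory CategoryTheory.Limits

namespace CochainComplex.IsKInjective

open HomotopyCategory

variable {C : Type*} [Category C] [Abelian C]

/- A K-injective complex is local with respect to the quasi-isomorphisms of the homotopy
category, so precomposition with the class of a quasi-isomorphism is bijective on maps into it;
a preimage of the identity is the required left inverse. -/
theorem exists_homotopy_comp_eq_id {K L : CochainComplex C ℤ} [K.IsKInjective]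
    (f : K ⟶ L) [QuasiIso f] :
    ∃ g : L ⟶ K, Nonempty (Homotopy (f ≫ g) (𝟙 K)) := by
  have hK : (subcategoryAcyclic C).trW.isLocal ((quotient C (.up ℤ)).obj K) := by
    rw [ObjectProperty.isLocal_trW]
    exact rightOrthogonal K
  have hf : (subcategoryAcyclic C).trW ((quotient C (.up ℤ)).map f) := by
    rw [← quasiIso_eq_trW_subcategoryAcyclic, quotient_map_mem_quasiIso_iff,
      HomologicalComplex.mem_quasiIso_iff]
    infer_instance
  obtain ⟨g, hg⟩ := (hK _ hf).2 (𝟙 _)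
  obtain ⟨g, rfl⟩ := (quotient C (.up ℤ)).map_surjective g
  refine ⟨g, ⟨homotopyOfEq _ _ ?_⟩⟩
  simpa using hg

end CochainComplex.IsKInjective

theorem stmt_9_general {A : Type*} [Category A] [Abelian A]
    (J C : CochainComplex A ℤ)
    (hJbdd : ∃ N : ℤ, ∀ i < N, IsZero (J.X i))
    (hJinj : ∀ i : ℤ, Injective (J.X i))
    (f : J ⟶ C) [QuasiIso f] :
    ∃ g : C ⟶ J, Nonempty (Homotopy (f ≫ g) (𝟙 J)) := by
  obtain ⟨N, hN⟩ := hJbdd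
  have : J.IsStrictlyGE N := (J.isStrictlyGE_iff N).2 fun i hi ↦ hN i hi
  have : J.IsKInjective := J.isKInjective_of_injective N
  exact CochainComplex.IsKInjective.exists_homotopy_comp_eq_id f

/-- Let `A` be an abelian category, `J` and `C` bounded below cochain
complexes with every `J i` injective, and `f : J ⟶ C` a quasi-isomorphism. Then there is
a cochain map `g : C ⟶ J` with `f ≫ g` homotopic to the identity of `J`; that is, `f` is
a split monomorphism in the homotopy category of bounded below complexes. -/
theorem stmt_9 {A : Type*} [Category A] [Abelian A]
    (J C : CochainComplex A ℤ)
    (hJbdd : ∃ N : ℤ, ∀ i < N, IsZero (J.X i))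
    (hCbdd : ∃ N : ℤ, ∀ i < N, IsZero (C.X i))
    (hJinj : ∀ i : ℤ, Injective (J.X i))
    (f : J ⟶ C) [QuasiIso f] :
    ∃ g : C ⟶ J, Nonempty (Homotopy (f ≫ g) (𝟙 J)) :=
  stmt_9_general J C hJbdd hJinj f
end

section
/- Let A be an abelian category, let J and J̃ be bounded below ℤ-indexed cochain complexes in A with every object Jⁱ and J̃ⁱ injective, and let f : J → J̃ be a cochain map. Suppose there is a bounded below complex C and a quasi-isomorphism g : C → J with every component gⁿ a monomorphism, such that f ∘ g = 0. Then f is null-homotopic. -/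
open CategoryTheory CategoryTheory.Limits

/-!
The cokernel `Q` of the monomorphism `g : C ⟶ J` is acyclic, by the long exact homology
sequence of `0 ⟶ C ⟶ J ⟶ Q ⟶ 0` and the fact that `g` is a quasi-isomorphism. Since
`g ≫ f = 0`, `f` factors through `J ⟶ Q`. A bounded below complex of injectives is
K-injective, so every map into it from an acyclic complex is null-homotopic; in particular
so is `Q ⟶ J̃`, hence `f`.
-/

namespace CochainComplex

variable {A : Type*} [Category A] [Abelian A]

lemma acyclic_cokernel_of_quasiIso {C J : CochainComplex A ℤ} (g : C ⟶ J) [Mono g]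
    [QuasiIso g] : (cokernel g).Acyclic :=
  ShortComplex.ShortExact.acyclic_X₃
    (S := ShortComplex.mk g (cokernel.π g) (cokernel.condition g))
    { exact := ShortComplex.exact_of_g_is_cokernel _ (cokernelIsCokernel g) }
    ‹_›

lemma IsKInjective.nonempty_homotopy_zero_of_comp_eq_zero {C J L : CochainComplex A ℤ}
    (g : C ⟶ J) [Mono g] [QuasiIso g] (f : J ⟶ L) [L.IsKInjective] (hgf : g ≫ f = 0) :
    Nonempty (Homotopy f 0) :=
  ⟨(Homotopy.ofEq (cokernel.π_desc g f hgf).symm).trans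
    (((IsKInjective.homotopyZero _ (acyclic_cokernel_of_quasiIso g)).compLeft _).trans
      (.ofEq comp_zero))⟩

end CochainComplex

theorem stmt_11_general {A : Type*} [Category A] [Abelian A]
    (J J' : CochainComplex A ℤ)
    (hJ'bdd : ∃ N : ℤ, ∀ i < N, IsZero (J'.X i))
    (hJ'inj : ∀ i : ℤ, Injective (J'.X i))
    (f : J ⟶ J')
    (C : CochainComplex A ℤ)
    (g : C ⟶ J) [QuasiIso g]
    (hmono : ∀ n : ℤ, Mono (g.f n))
    (hgf : g ≫ f = 0) :
    Nonempty (Homotopy f 0) := by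
  obtain ⟨N, hN⟩ := hJ'bdd
  have : J'.IsStrictlyGE N := (J'.isStrictlyGE_iff N).2 fun i hi ↦ hN i hi
  have : J'.IsKInjective := J'.isKInjective_of_injective N
  have : Mono g := HomologicalComplex.mono_of_mono_f g hmono
  exact CochainComplex.IsKInjective.nonempty_homotopy_zero_of_comp_eq_zero g f hgf

/-- Let `A` be an abelian category, `J` and `J̃` bounded below cochain
complexes of injectives, and `f : J ⟶ J̃` a cochain map. If there is a bounded below
complex `C` and a quasi-isomorphism `g : C ⟶ J` with all components mono such that
`g ≫ f = 0`, then `f` is null-homotopic. -/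
theorem stmt_11 {A : Type*} [Category A] [Abelian A]
    (J J' : CochainComplex A ℤ)
    (hJbdd : ∃ N : ℤ, ∀ i < N, IsZero (J.X i))
    (hJ'bdd : ∃ N : ℤ, ∀ i < N, IsZero (J'.X i))
    (hJinj : ∀ i : ℤ, Injective (J.X i))
    (hJ'inj : ∀ i : ℤ, Injective (J'.X i))
    (f : J ⟶ J')
    (C : CochainComplex A ℤ)
    (hCbdd : ∃ N : ℤ, ∀ i < N, IsZero (C.X i))
    (g : C ⟶ J) [QuasiIso g]
    (hmono : ∀ n : ℤ, Mono (g.f n))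
    (hgf : g ≫ f = 0) :
    Nonempty (Homotopy f 0) :=
  stmt_11_general J J' hJ'bdd hJ'inj f C g hmono hgf
end

section
/- Let A be an abelian category and m ∈ ℤ. Let C be a bounded below ℤ-indexed cochain complex in A with Hⁱ(C) = 0 for all i < m, and let ι : D → C be a cochain map with every component a monomorphism such that Hⁱ(D) = 0 for all i ≠ m and Hᵐ(ι) : Hᵐ(D) → Hᵐ(C) is an isomorphism. Let J be a cochain complex with Hⁱ(J) = 0 for all i ≠ m, and let f : C → J be a cochain map such that f ∘ ι : D → J is a quasi-isomorphism. Let π : C → C/D be the quotient map onto the degreewise cokernel of ι. Then the cochain map (f, π) : C → J ⊕ (C/D) is a quasi-isomorphism. -/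
/-!
Let `Q = C/D`. Since `Hⁱ(ι)` is mono in every degree, the connecting maps of the long exact
sequence of `0 → D → C → Q → 0` vanish, so it splits into short exact sequences
`0 → Hⁱ D → Hⁱ C → Hⁱ Q → 0`. In degrees `i ≤ m` the map `Hⁱ(ι)` is an isomorphism, hence
`Hⁱ Q = 0` and `Hⁱ f` is an isomorphism by two-out-of-three; in degrees `i > m` we have
`Hⁱ D = 0`, hence `Hⁱ π` is an isomorphism, while `Hⁱ J = 0`. In either case one component of
`Hⁱ(f, π)` is an isomorphism and the other lands in a zero object.
-/

open CategoryTheory CategoryTheory.Limits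

section Biprod

variable {C : Type*} [Category C] [HasZeroMorphisms C] {X Y Z : C} [HasBinaryBiproduct Y Z]

lemma isIso_biprod_lift_of_isZero_right (u : X ⟶ Y) (v : X ⟶ Z) [IsIso u] (hZ : IsZero Z) :
    IsIso (biprod.lift u v) := by
  have : IsIso (biprod.fst : Y ⊞ Z ⟶ Y) := (isoBiprodZero hZ).isIso_inv
  have : IsIso (biprod.lift u v ≫ biprod.fst) := by rwa [biprod.lift_fst]
  exact IsIso.of_isIso_comp_right _ biprod.fst

lemma isIso_biprod_lift_of_isZero_left (u : X ⟶ Y) (v : X ⟶ Z) [IsIso v] (hY : IsZero Y) :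
    IsIso (biprod.lift u v) := by
  have : IsIso (biprod.snd : Y ⊞ Z ⟶ Z) := (isoZeroBiprod hY).isIso_inv
  have : IsIso (biprod.lift u v ≫ biprod.snd) := by rwa [biprod.lift_snd]
  exact IsIso.of_isIso_comp_right _ biprod.snd

end Biprod

namespace HomologicalComplex

variable {C : Type*} [Category C] [Abelian C] {ι : Type*} {c : ComplexShape ι}
  {K L M : HomologicalComplex C c} (f : K ⟶ L) (g : K ⟶ M) (i : ι)

lemma isIso_homologyMap_biprod_lift_iff :
    IsIso (homologyMap (biprod.lift f g) i) ↔
      IsIso (biprod.lift (homologyMap f i) (homologyMap g i)) := by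
  let F := homologyFunctor C c i
  have : PreservesBinaryBiproduct L M F := preservesBinaryBiproduct_of_preservesBiproduct F L M
  change IsIso (F.map _) ↔ IsIso (biprod.lift (F.map f) (F.map g))
  rw [← biprod.map_lift_mapBiprod F L M f g]
  exact (isIso_comp_right_iff _ _).symm

lemma quasiIsoAt_biprod_lift_of_isZero_right [QuasiIsoAt f i] (hM : IsZero (M.homology i)) :
    QuasiIsoAt (biprod.lift f g) i := by
  rw [quasiIsoAt_iff_isIso_homologyMap, isIso_homologyMap_biprod_lift_iff]
  exact isIso_biprod_lift_of_isZero_right (homologyMap f i) (homologyMap g i) hM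

lemma quasiIsoAt_biprod_lift_of_isZero_left [QuasiIsoAt g i] (hL : IsZero (L.homology i)) :
    QuasiIsoAt (biprod.lift f g) i := by
  rw [quasiIsoAt_iff_isIso_homologyMap, isIso_homologyMap_biprod_lift_iff]
  exact isIso_biprod_lift_of_isZero_left (homologyMap f i) (homologyMap g i) hL

end HomologicalComplex

namespace CategoryTheory.ShortComplex.ShortExact

variable {C : Type*} [Category C] [Abelian C] {ι : Type*} {c : ComplexShape ι}
  {S : ShortComplex (HomologicalComplex C c)} (hS : S.ShortExact) {i j : ι} (hij : c.Rel i j)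

include hS hij

lemma δ_eq_zero_of_mono_homologyMap [Mono (HomologicalComplex.homologyMap S.f j)] :
    hS.δ i j hij = 0 := by
  rw [← cancel_mono (HomologicalComplex.homologyMap S.f j), zero_comp]
  exact hS.δ_comp i j hij

lemma isZero_homology_X₃_of_epi_of_mono [Epi (HomologicalComplex.homologyMap S.f i)]
    [Mono (HomologicalComplex.homologyMap S.f j)] : IsZero (S.X₃.homology i) := by
  refine (hS.homology_exact₃ i j hij).isZero_X₂ ?_ (hS.δ_eq_zero_of_mono_homologyMap hij)
  rw [← cancel_epi (HomologicalComplex.homologyMap S.f i), ← HomologicalComplex.homologyMap_comp,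
    S.zero, HomologicalComplex.homologyMap_zero, comp_zero]

lemma quasiIsoAt_g_of_isZero_homology_X₁ (h₁ : IsZero (S.X₁.homology i))
    [Mono (HomologicalComplex.homologyMap S.f j)] : QuasiIsoAt S.g i := by
  rw [quasiIsoAt_iff_isIso_homologyMap]
  have := (hS.homology_exact₂ i).mono_g (h₁.eq_of_src _ _)
  have := (hS.homology_exact₃ i j hij).epi_f (hS.δ_eq_zero_of_mono_homologyMap hij)
  exact isIso_of_mono_of_epi _

end CategoryTheory.ShortComplex.ShortExact

theorem stmt_17_general {A : Type*} [Category A] [Abelian A] (m : ℤ)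
    (C D J : CochainComplex A ℤ)
    (hC : ∀ i < m, IsZero (C.homology i))
    (ι : D ⟶ C) (hιmono : ∀ n : ℤ, Mono (ι.f n))
    (hD : ∀ i : ℤ, i ≠ m → IsZero (D.homology i))
    (hιm : IsIso (HomologicalComplex.homologyMap ι m))
    (hJ : ∀ i : ℤ, i ≠ m → IsZero (J.homology i))
    (f : C ⟶ J) [QuasiIso (ι ≫ f)] :
    QuasiIso (biprod.lift f (cokernel.π ι) : C ⟶ J ⊞ cokernel ι) := by
  have : Mono ι := HomologicalComplex.mono_of_mono_f ι hιmono
  let S := ShortComplex.mk ι (cokernel.π ι) (cokernel.condition ι)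
  have hS : S.ShortExact :=
    .mk' (S.exact_of_g_is_cokernel (cokernelIsCokernel ι)) ‹_› inferInstance
  have hιquasiIsoAt (i : ℤ) (hi : i ≤ m) : QuasiIsoAt ι i := by
    rw [quasiIsoAt_iff_isIso_homologyMap]
    rcases hi.lt_or_eq with hi | rfl
    · exact isIso_of_source_target_iso_zero _ (hD i hi.ne).isoZero (hC i hi).isoZero
    · exact hιm
  have hHιmono (j : ℤ) : Mono (HomologicalComplex.homologyMap ι j) := by
    by_cases hj : j = m
    · subst hj; infer_instance
    · exact ⟨fun _ _ _ => (hD j hj).eq_of_tgt _ _⟩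
  rw [quasiIso_iff]
  intro i
  have := hHιmono (i + 1)
  rcases le_or_gt i m with hi | hi
  · have := hιquasiIsoAt i hi
    have : QuasiIsoAt f i := quasiIsoAt_of_comp_left ι f i
    exact HomologicalComplex.quasiIsoAt_biprod_lift_of_isZero_right f _ i
      (hS.isZero_homology_X₃_of_epi_of_mono (i := i) (j := i + 1) rfl)
  · have := hS.quasiIsoAt_g_of_isZero_homology_X₁ (i := i) (j := i + 1) rfl (hD i hi.ne')
    exact HomologicalComplex.quasiIsoAt_biprod_lift_of_isZero_left _ (cokernel.π ι) i
      (hJ i hi.ne')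

/-- Let `A` be an abelian category, `m ∈ ℤ`, `C` a bounded below cochain
complex with `Hⁱ(C) = 0` for `i < m`, and `ι : D ⟶ C` a degreewise monomorphism with
`Hⁱ(D) = 0` for `i ≠ m` and `Hᵐ(ι)` an isomorphism. Let `J` be a complex with
`Hⁱ(J) = 0` for `i ≠ m` and `f : C ⟶ J` a cochain map such that `ι ≫ f` is a
quasi-isomorphism. Then the map `(f, π) : C ⟶ J ⊞ (C/D)`, where `π : C ⟶ C/D` is the
quotient map onto the degreewise cokernel of `ι`, is a quasi-isomorphism. -/
theorem stmt_17 {A : Type*} [Category A] [Abelian A] (m : ℤ)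
    (C D J : CochainComplex A ℤ)
    (hCbdd : ∃ N : ℤ, ∀ i < N, IsZero (C.X i))
    (hC : ∀ i < m, IsZero (C.homology i))
    (ι : D ⟶ C) (hιmono : ∀ n : ℤ, Mono (ι.f n))
    (hD : ∀ i : ℤ, i ≠ m → IsZero (D.homology i))
    (hιm : IsIso (HomologicalComplex.homologyMap ι m))
    (hJ : ∀ i : ℤ, i ≠ m → IsZero (J.homology i))
    (f : C ⟶ J) [QuasiIso (ι ≫ f)] :
    QuasiIso (biprod.lift f (cokernel.π ι) : C ⟶ J ⊞ cokernel ι) :=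
  stmt_17_general m C D J hC ι hιmono hD hιm hJ f
end
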